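/- Let G be a C_3□P_2-free graph and let v_1,...,v_6 be six distinct vertices of G such that v_i and v_j are adjacent whenever 1 ≤ |i−j| ≤ 2 (a copy of P_6^2). Suppose G has two further vertices x and y outside {v_1,...,v_6} such that the neighbor set of x in {v_1,...,v_6} is {v_1,v_2,v_3,v_4} and the neighbor set of y in {v_1,...,v_6} is {v_1,v_3,v_5,v_6} (the configuration H_1). Then the number of edges of G with both endpoints in {v_1,...,v_6} is at most 10, with equality if and only if v_3v_6 is an edge of G. -/

import Mathlib

/-!
Write `v₁, …, v₆` for `v 0, …, v 5`. Of the six non-edges of `P_6²`, all but `v₃v₆` are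
forbidden: adding `v₁v₄` gives the triangles `v₁v₂v₄`, `yv₃v₅` matched by `v₁y, v₂v₃, v₄v₅`, and
each of `v₁v₅, v₁v₆, v₂v₅, v₂v₆` likewise closes a triangle that is matched to a triangle
through `x` or `y`, i.e. a triangular prism. So the copy spans the nine edges of `P_6²`, plus
`v₃v₆` when it is present.
-/

open SimpleGraph

/-- `CopyIn H G` means `G` contains a subgraph isomorphic to `H`,
i.e. there is an injective graph homomorphism from `H` to `G`. -/
def CopyIn {α β : Type*} (H : SimpleGraph α) (G : SimpleGraph β) : Prop :=
  ∃ f : α ↪ β, ∀ a b, H.Adj a b → G.Adj (f a) (f b)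

/-- The Turán number `ex(n, H)`: the maximum number of edges in an
`H`-free graph on `n` vertices. -/
noncomputable def exNum {α : Type*} (n : ℕ) (H : SimpleGraph α) : ℕ :=
  sSup {m : ℕ | ∃ G : SimpleGraph (Fin n), ¬ CopyIn H G ∧ G.edgeSet.ncard = m}

/-- The odd prism `C_{2k+1} □ P_2`. -/
def oddPrism (k : ℕ) : SimpleGraph (Fin (2 * k + 1) × Fin 2) :=
  cycleGraph (2 * k + 1) □ pathGraph 2

/-- `P_6^2`, the square of the path on six vertices: `i` and `j` are adjacent
iff `1 ≤ |i - j| ≤ 2`. -/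
def pathSq6 : SimpleGraph (Fin 6) :=
  SimpleGraph.fromRel (fun i j => (i : ℕ) < (j : ℕ) ∧ (j : ℕ) ≤ (i : ℕ) + 2)

instance : DecidableRel pathSq6.Adj := fun _ _ =>
  decidable_of_iff _ (fromRel_adj _ _ _).symm

instance : DecidableRel (pathGraph 2).Adj := fun _ _ =>
  decidable_of_iff _ (pathGraph_adj.symm)

instance : DecidableRel (oddPrism 1).Adj := fun _ _ =>
  decidable_of_iff _ (boxProd_adj.symm)

lemma copyIn_oddPrism_one_of_triangles {V : Type*} {G : SimpleGraph V} {a b c d e f : V}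
    (hab : G.Adj a b) (hbc : G.Adj b c) (hac : G.Adj a c)
    (hde : G.Adj d e) (hef : G.Adj e f) (hdf : G.Adj d f)
    (had : G.Adj a d) (hbe : G.Adj b e) (hcf : G.Adj c f)
    (hae : a ≠ e) (haf : a ≠ f) (hbd : b ≠ d) (hbf : b ≠ f) (hcd : c ≠ d) (hce : c ≠ e) :
    CopyIn (oddPrism 1) G := by
  have := hab.ne; have := hbc.ne; have := hac.ne; have := hde.ne; have := hef.ne
  have := hdf.ne; have := had.ne; have := hbe.ne; have := hcf.ne
  let φ : Fin 3 × Fin 2 → V := fun p => ![![a, b, c], ![d, e, f]] p.2 p.1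
  have hφ : Function.Injective φ := by
    intro p q hpq
    fin_cases p <;> fin_cases q <;> dsimp [φ] at hpq ⊢ <;>
      first | rfl | exact absurd hpq ‹_› | exact absurd hpq.symm ‹_›
  refine ⟨⟨φ, hφ⟩, fun p q hpq => ?_⟩
  fin_cases p <;> fin_cases q <;> dsimp [φ] at hpq ⊢ <;>
    first | exact absurd hpq (by decide) | assumption | exact Adj.symm ‹_›

lemma ncard_edgeSet_induce_range {V W : Type*} (G : SimpleGraph W) (f : V ↪ W) :
    (G.induce (Set.range f)).edgeSet.ncard = (G.comap f).edgeSet.ncard :=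
  (Nat.card_congr (Embedding.comap f G).isoInduceRange.mapEdgeSet).symm

lemma eq_sup_edge_of_le_of_adj {V : Type*} {H K : SimpleGraph V} {a b : V} (hHK : H ≤ K)
    (hK : K ≤ H ⊔ edge a b) (hab : K.Adj a b) : K = H ⊔ edge a b :=
  le_antisymm hK (sup_le hHK ((edge_le_iff K).mpr (Or.inr hab)))

lemma eq_of_le_sup_edge_of_not_adj {V : Type*} {H K : SimpleGraph V} {a b : V} (hHK : H ≤ K)
    (hK : K ≤ H ⊔ edge a b) (hab : ¬ K.Adj a b) : K = H := by
  refine le_antisymm (fun u w huw => ?_) hHK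
  rcases hK huw with h | h
  · exact h
  rcases (edge_adj a b u w).mp h with ⟨⟨rfl, rfl⟩ | ⟨rfl, rfl⟩, -⟩
  · exact absurd huw hab
  · exact absurd huw.symm hab

lemma ncard_edgeSet_pathSq6 : pathSq6.edgeSet.ncard = 9 := by
  rw [← coe_edgeFinset, Set.ncard_coe_finset]; decide

lemma ncard_edgeSet_pathSq6_sup_edge : (pathSq6 ⊔ edge 2 5).edgeSet.ncard = 10 := by
  rw [← coe_edgeFinset, Set.ncard_coe_finset, card_edgeFinset_sup_edge _ (by decide) (by decide),
    ← Set.ncard_coe_finset, coe_edgeFinset, ncard_edgeSet_pathSq6]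

lemma comap_le_pathSq6_sup_edge {V : Type*} {G : SimpleGraph V}
    (hfree : ¬ CopyIn (oddPrism 1) G)
    (v : Fin 6 ↪ V) (hv : ∀ i j, pathSq6.Adj i j → G.Adj (v i) (v j))
    {x y : V} (hx : x ∉ Set.range v) (hy : y ∉ Set.range v)
    (hNx : {0, 1, 2, 3} ⊆ {i : Fin 6 | G.Adj x (v i)})
    (hNy : {0, 2, 4, 5} ⊆ {i : Fin 6 | G.Adj y (v i)}) :
    G.comap v ≤ pathSq6 ⊔ edge 2 5 := by
  have hxv : ∀ i, v i ≠ x ∧ x ≠ v i := fun i => ⟨fun h => hx ⟨i, h⟩, fun h => hx ⟨i, h.symm⟩⟩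
  have hyv : ∀ i, v i ≠ y ∧ y ≠ v i := fun i => ⟨fun h => hy ⟨i, h⟩, fun h => hy ⟨i, h.symm⟩⟩
  have h01 := hv 0 1 (by decide); have h02 := hv 0 2 (by decide)
  have h12 := hv 1 2 (by decide); have h13 := hv 1 3 (by decide)
  have h23 := hv 2 3 (by decide); have h24 := hv 2 4 (by decide)
  have h34 := hv 3 4 (by decide); have h35 := hv 3 5 (by decide)
  have hx0 : G.Adj x (v 0) := hNx (by simp); have hx1 : G.Adj x (v 1) := hNx (by simp)
  have hx2 : G.Adj x (v 2) := hNx (by simp); have hx3 : G.Adj x (v 3) := hNx (by simp)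
  have hy0 : G.Adj y (v 0) := hNy (by simp); have hy2 : G.Adj y (v 2) := hNy (by simp)
  have hy4 : G.Adj y (v 4) := hNy (by simp); have hy5 : G.Adj y (v 5) := hNy (by simp)
  have n03 : ¬ G.Adj (v 0) (v 3) := fun h => hfree <| by
    refine copyIn_oddPrism_one_of_triangles h01 h13 h hy2 h24 hy4 hy0.symm h12 h34
      ?_ ?_ ?_ ?_ ?_ ?_ <;> simp [hyv]
  have n04 : ¬ G.Adj (v 0) (v 4) := fun h => hfree <| by
    refine copyIn_oddPrism_one_of_triangles h02 h24 h hx1.symm hx3 h13 h01 hx2.symm h34.symm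
      ?_ ?_ ?_ ?_ ?_ ?_ <;> simp [hxv]
  have n05 : ¬ G.Adj (v 0) (v 5) := fun h => hfree <| by
    refine copyIn_oddPrism_one_of_triangles h hy5.symm hy0.symm h13 h23.symm h12 h01 h35.symm hy2
      ?_ ?_ ?_ ?_ ?_ ?_ <;> simp [hyv]
  have n14 : ¬ G.Adj (v 1) (v 4) := fun h => hfree <| by
    refine copyIn_oddPrism_one_of_triangles h13 h34 h hx0.symm hx2 h02 h01.symm hx3.symm h24.symm
      ?_ ?_ ?_ ?_ ?_ ?_ <;> simp [hxv]
  have n15 : ¬ G.Adj (v 1) (v 5) := fun h => hfree <| by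
    refine copyIn_oddPrism_one_of_triangles h13 h35 h h02 hy2.symm hy0.symm h01.symm h23.symm
      hy5.symm ?_ ?_ ?_ ?_ ?_ ?_ <;> simp [hyv]
  intro i j hij
  rw [comap_adj] at hij
  fin_cases i <;> fin_cases j <;> dsimp at hij <;>
    first
    | decide
    | exact absurd hij G.irrefl
    | exact absurd hij ‹_›
    | exact absurd hij.symm ‹_›
    | exact Or.inr ((edge_adj ..).mpr (by decide))

/-- Configuration `H₁`: a copy `v` of `P_6²` in a `C_3□P_2`-free
graph `G` together with outside vertices `x`, `y` whose neighbor sets in the copy are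
`{v_1, v_2, v_3, v_4}` and `{v_1, v_3, v_5, v_6}` respectively. Then the copy spans
at most `10` edges of `G`, with equality iff `v_3 v_6` is an edge. -/
theorem config_H1_edge_bound {V : Type*} (G : SimpleGraph V)
    (hfree : ¬ CopyIn (oddPrism 1) G)
    (v : Fin 6 ↪ V) (hv : ∀ i j, pathSq6.Adj i j → G.Adj (v i) (v j))
    (x y : V) (hx : x ∉ Set.range v) (hy : y ∉ Set.range v)
    (hNx : {i : Fin 6 | G.Adj x (v i)} = {0, 1, 2, 3})
    (hNy : {i : Fin 6 | G.Adj y (v i)} = {0, 2, 4, 5}) :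
    (G.induce (Set.range v)).edgeSet.ncard ≤ 10 ∧
      ((G.induce (Set.range v)).edgeSet.ncard = 10 ↔ G.Adj (v 2) (v 5)) := by
  have hle := comap_le_pathSq6_sup_edge hfree v hv hx hy hNx.ge hNy.ge
  have hge : pathSq6 ≤ G.comap v := hv
  rw [ncard_edgeSet_induce_range]
  by_cases h25 : G.Adj (v 2) (v 5)
  · rw [eq_sup_edge_of_le_of_adj hge hle h25, ncard_edgeSet_pathSq6_sup_edge]
    simp [h25]
  · rw [eq_of_le_sup_edge_of_not_adj hge hle h25, ncard_edgeSet_pathSq6]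
    simp [h25]
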